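/- Fix natural numbers k < n and let 𝔉 denote the constant foliation of ℝⁿ = ℝᵏ × ℝ^{n−k} by the translates of ℝᵏ × {0}. Let ε > 0 and d, C ∈ ℕ with 1 ≤ d ≤ n − k, let p ∈ ℝⁿ, and let 𝒟 be a set of C linear simplices in ℝⁿ, each transverse to 𝔉. Then there exist δ > 0 and a point p' ∈ B(p, ε) such that B(p', δ) ⊆ B(p, ε) and for every (d−1)-dimensional simplex Δ ∈ 𝒟 the join p'⋆Δ is a non-degenerate linear d-simplex that is δ-semitransverse to 𝔉 in p'. -/

import Mathlib

noncomputable section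

open Metric Set

/-- Two linear subspaces of ℝⁿ are transverse if the dimension of their span is maximal. -/
def Transv {n : ℕ} (V W : Submodule ℝ (EuclideanSpace ℝ (Fin n))) : Prop :=
  Module.finrank ℝ ↥(V ⊔ W) = min (Module.finrank ℝ ↥V + Module.finrank ℝ ↥W) n

/-- The space of directions of the affine span of a family of points (Gr(Δ)). -/
def simplexDir {n m : ℕ} (v : Fin m → EuclideanSpace ℝ (Fin n)) :
    Submodule ℝ (EuclideanSpace ℝ (Fin n)) :=
  (affineSpan ℝ (Set.range v)).direction

/-- Orthogonal projection of ℝⁿ onto the orthogonal complement of V, as a map ℝⁿ → ℝⁿ. -/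
def projPerp {n : ℕ} (V : Submodule ℝ (EuclideanSpace ℝ (Fin n)))
    (x : EuclideanSpace ℝ (Fin n)) : EuclideanSpace ℝ (Fin n) :=
  (Vᗮ.orthogonalProjectionOnto x : EuclideanSpace ℝ (Fin n))

/-- Orthogonal projection onto V as a continuous linear endomorphism of ℝⁿ. -/
def projCL {n : ℕ} (V : Submodule ℝ (EuclideanSpace ℝ (Fin n))) :
    EuclideanSpace ℝ (Fin n) →L[ℝ] EuclideanSpace ℝ (Fin n) :=
  V.subtypeL.comp (V.orthogonalProjectionOnto)

/-- Operator-norm distance between orthogonal projections. -/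
def dProj {n : ℕ} (V W : Submodule ℝ (EuclideanSpace ℝ (Fin n))) : ℝ :=
  ‖projCL V - projCL W‖

/-- `p⋆Δ` is `δ`-semitransverse to `𝔉(V)` in `p`. -/
def SemiT {n m : ℕ} (δ : ℝ) (p : EuclideanSpace ℝ (Fin n))
    (v : Fin m → EuclideanSpace ℝ (Fin n))
    (V : Submodule ℝ (EuclideanSpace ℝ (Fin n))) : Prop :=
  ∀ p' : EuclideanSpace ℝ (Fin n), dist p' p < δ →
    AffineIndependent ℝ (Fin.cons p' v : Fin (m+1) → EuclideanSpace ℝ (Fin n)) ∧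
    Transv (simplexDir (Fin.cons p' v : Fin (m+1) → EuclideanSpace ℝ (Fin n))) V

/-- Maximal distance between two vertices of a simplex. -/
def rMax {n m : ℕ} (v : Fin m → EuclideanSpace ℝ (Fin n)) : ℝ :=
  ⨆ i, ⨆ j, dist (v i) (v j)

/-- Minimal distance between a vertex and the affine span of the opposite face. -/
def rMin {n m : ℕ} (v : Fin m → EuclideanSpace ℝ (Fin n)) : ℝ :=
  ⨅ i, Metric.infDist (v i) (affineSpan ℝ (v '' {i}ᶜ) : Set (EuclideanSpace ℝ (Fin n)))

/-- The degeneracy quantity Λ(Δ). -/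
def Lam {n m : ℕ} (v : Fin (m+1) → EuclideanSpace ℝ (Fin n)) : ℝ :=
  sSup {t : ℝ | ∃ lam : Fin m → ℝ,
    ‖∑ i, lam i • (v i.succ - v 0)‖ = 1 ∧ ∃ i, t = |lam i|}

/-- ε-transversality of a simplex with vertices `v` to the constant foliation `𝔉(V)`. -/
def EpsT {n m : ℕ} (ε : ℝ) (v : Fin (m+1) → EuclideanSpace ℝ (Fin n))
    (V : Submodule ℝ (EuclideanSpace ℝ (Fin n))) : Prop :=
  ∀ D : Submodule ℝ (EuclideanSpace ℝ (Fin n)),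
    Module.finrank ℝ ↥D = m → dProj (simplexDir v) D < ε → Transv D V

/-- δ-semitransversality of a simplex in its `i`-th vertex. -/
def STat {n m : ℕ} (δ : ℝ) (w : Fin m → EuclideanSpace ℝ (Fin n)) (i : Fin m)
    (V : Submodule ℝ (EuclideanSpace ℝ (Fin n))) : Prop :=
  ∀ p' : EuclideanSpace ℝ (Fin n), dist p' (w i) < δ →
    AffineIndependent ℝ (Function.update w i p') ∧
    Transv (simplexDir (Function.update w i p')) V

/-- The coordinate subspace ℝᵏ × {0} of ℝⁿ. -/
def stdFol (n k : ℕ) : Submodule ℝ (EuclideanSpace ℝ (Fin n)) where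
  carrier := {x | ∀ i : Fin n, k ≤ (i : ℕ) → x i = 0}
  zero_mem' := fun i _ => rfl
  add_mem' := by
    intro x y hx hy i hi
    show x i + y i = 0
    rw [hx i hi, hy i hi, add_zero]
  smul_mem' := by
    intro c x hx i hi
    show c * x i = 0
    rw [hx i hi, mul_zero]

/-- Graph of a linear map V → V⊥ as a subspace of ℝⁿ. -/
def graphOf {n : ℕ} {V : Submodule ℝ (EuclideanSpace ℝ (Fin n))}
    (T : ↥V →L[ℝ] ↥Vᗮ) : Submodule ℝ (EuclideanSpace ℝ (Fin n)) :=
  LinearMap.range (V.subtype + Vᗮ.subtype.comp T.toLinearMap)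

/-!
For a `(d-1)`-simplex `Δ` with first vertex `v₀`, the join `p'⋆Δ` is a non-degenerate simplex
transverse to `W = ℝᵏ × {0}` as soon as `p' - v₀ ∉ Gr(Δ) ⊔ W`: adding a vector outside
`Gr(Δ) ⊔ W` raises both `dim Gr` and `dim (Gr ⊔ W)` by one. Since `Gr(Δ)` and `W` are transverse
with `(d - 1) + k < n`, the excluded points form a proper affine subspace. Finitely many proper
affine subspaces are closed and nowhere dense, so `B(p, ε)` contains a ball avoiding all of them.
-/

open Module

lemma Fin.card_subtype_le_val (n k : ℕ) : Fintype.card {i : Fin n // k ≤ (i : ℕ)} = n - k := by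
  simp only [← not_lt]
  rw [Fintype.card_subtype_compl, Fintype.card_subtype, Fin.card_filter_val_lt, Fintype.card_fin]
  omega

lemma finrank_stdFol {n k : ℕ} (hk : k ≤ n) : finrank ℝ (stdFol n k) = k := by
  let L : EuclideanSpace ℝ (Fin n) →ₗ[ℝ] ({i : Fin n // k ≤ (i : ℕ)} → ℝ) :=
    LinearMap.funLeft ℝ ℝ Subtype.val ∘ₗ (WithLp.linearEquiv 2 ℝ (Fin n → ℝ)).toLinearMap
  have hL : Function.Surjective L :=
    (LinearMap.funLeft_surjective_of_injective ℝ ℝ _ Subtype.val_injective).comp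
      (WithLp.linearEquiv 2 ℝ _).surjective
  have hker : LinearMap.ker L = stdFol n k := by
    ext x
    exact ⟨fun h i hi => congrFun h ⟨i, hi⟩, fun h => funext fun i => h i i.2⟩
  have := L.finrank_range_add_finrank_ker
  rw [LinearMap.range_eq_top.2 hL, finrank_top, finrank_fintype_fun_eq_card,
    Fin.card_subtype_le_val, hker, finrank_euclideanSpace_fin] at this
  omega

section AffineSpace

variable {𝕜 V P : Type*} [Field 𝕜] [AddCommGroup V] [Module 𝕜 V] [AddTorsor V P]

lemma vectorSpan_range_cons {m : ℕ} (q : P) (v : Fin (m + 1) → P) :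
    vectorSpan 𝕜 (range (Fin.cons q v : Fin (m + 2) → P)) =
      Submodule.span 𝕜 {q -ᵥ v 0} ⊔ vectorSpan 𝕜 (range v) := by
  rw [Fin.range_cons, ← direction_affineSpan, ← affineSpan_insert_affineSpan,
    AffineSubspace.direction_affineSpan_insert (mem_affineSpan 𝕜 (mem_range_self 0)),
    direction_affineSpan]

lemma AffineIndependent.cons [FiniteDimensional 𝕜 V] {m : ℕ} {v : Fin (m + 1) → P}
    (hv : AffineIndependent 𝕜 v) {q : P} (hq : q -ᵥ v 0 ∉ vectorSpan 𝕜 (range v)) :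
    AffineIndependent 𝕜 (Fin.cons q v : Fin (m + 2) → P) := by
  rw [affineIndependent_iff_finrank_vectorSpan_eq 𝕜 _ (n := m + 1) (by simp),
    vectorSpan_range_cons, sup_comm, Submodule.finrank_sup_span_singleton hq,
    hv.finrank_vectorSpan (Fintype.card_fin _)]

end AffineSpace

section NormedAffineSpace

variable {V P : Type*} [NormedAddCommGroup V] [NormedSpace ℝ V] [MetricSpace P]
  [NormedAddTorsor V P]

lemma AffineSubspace.interior_eq_empty {A : AffineSubspace ℝ P} (hA : A ≠ ⊤) :
    interior (A : Set P) = ∅ := by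
  by_contra h
  refine hA (top_unique ?_)
  calc ⊤ = affineSpan ℝ (interior (A : Set P)) :=
        (isOpen_interior.affineSpan_eq_top (nonempty_iff_ne_empty.2 h)).symm
    _ ≤ affineSpan ℝ (A : Set P) := affineSpan_mono ℝ interior_subset
    _ = A := A.affineSpan_coe

lemma exists_ball_subset_ball_forall_notMem_affineSubspace [FiniteDimensional ℝ V] {ι : Type*}
    [Finite ι] {A : ι → AffineSubspace ℝ P} (hA : ∀ i, A i ≠ ⊤) (p : P) {ε : ℝ} (hε : 0 < ε) :
    ∃ δ > 0, ∃ p' : P, dist p' p < ε ∧ ball p' δ ⊆ ball p ε ∧ ∀ q ∈ ball p' δ, ∀ i, q ∉ A i := by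
  have hU : IsOpen (⋂ i, (A i : Set P)ᶜ) :=
    isOpen_iInter_of_finite fun i => (A i).closed_of_finiteDimensional.isOpen_compl
  have hU' : Dense (⋂ i, (A i : Set P)ᶜ) := by
    rw [← sInter_range]
    refine (finite_range _).dense_sInter (forall_mem_range.2 fun i => ?_)
      (forall_mem_range.2 fun i => ?_)
    · exact (A i).closed_of_finiteDimensional.isOpen_compl
    · exact interior_eq_empty_iff_dense_compl.1 (AffineSubspace.interior_eq_empty (hA i))
  obtain ⟨p', hp'ε, hp'U⟩ := hU'.inter_open_nonempty (ball p ε) isOpen_ball (nonempty_ball.2 hε)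
  obtain ⟨δ, hδ, hsub⟩ := Metric.isOpen_iff.1 (isOpen_ball.inter hU) p' ⟨hp'ε, hp'U⟩
  exact ⟨δ, hδ, p', hp'ε, fun q hq => (hsub hq).1, fun q hq => mem_iInter.1 (hsub hq).2⟩

end NormedAffineSpace

section Transversality

variable {n : ℕ} {D V : Submodule ℝ (EuclideanSpace ℝ (Fin n))}

lemma Transv.finrank_sup (h : Transv D V) (hlt : finrank ℝ D + finrank ℝ V < n) :
    finrank ℝ ↥(D ⊔ V) = finrank ℝ D + finrank ℝ V := by
  rw [h]
  omega

lemma Transv.span_singleton_sup (h : Transv D V) (hlt : finrank ℝ D + finrank ℝ V < n)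
    {u : EuclideanSpace ℝ (Fin n)} (hu : u ∉ D ⊔ V) : Transv (Submodule.span ℝ {u} ⊔ D) V := by
  have hD : finrank ℝ ↥(Submodule.span ℝ {u} ⊔ D) = finrank ℝ D + 1 := by
    rw [sup_comm, Submodule.finrank_sup_span_singleton fun hD => hu (Submodule.mem_sup_left hD)]
  have hDV : finrank ℝ ↥(Submodule.span ℝ {u} ⊔ D ⊔ V) = finrank ℝ D + finrank ℝ V + 1 := by
    rw [sup_assoc, sup_comm, Submodule.finrank_sup_span_singleton hu, h.finrank_sup hlt]
  rw [Transv, hD, hDV]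
  omega

lemma Transv.sup_ne_top (h : Transv D V) (hlt : finrank ℝ D + finrank ℝ V < n) : D ⊔ V ≠ ⊤ := by
  intro htop
  have hrank := h.finrank_sup hlt
  rw [htop, finrank_top, finrank_euclideanSpace_fin] at hrank
  omega

lemma finrank_simplexDir {m : ℕ} {v : Fin (m + 1) → EuclideanSpace ℝ (Fin n)}
    (hv : AffineIndependent ℝ v) : finrank ℝ (simplexDir v) = m := by
  rw [simplexDir, direction_affineSpan, hv.finrank_vectorSpan (Fintype.card_fin _)]

lemma Transv.simplexDir_cons {m : ℕ} {v : Fin (m + 1) → EuclideanSpace ℝ (Fin n)}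
    (hv : AffineIndependent ℝ v) (h : Transv (simplexDir v) V) (hlt : m + finrank ℝ V < n)
    {q : EuclideanSpace ℝ (Fin n)} (hq : q - v 0 ∉ simplexDir v ⊔ V) :
    Transv (simplexDir (Fin.cons q v : Fin (m + 2) → EuclideanSpace ℝ (Fin n))) V := by
  rw [simplexDir, direction_affineSpan, vectorSpan_range_cons, ← direction_affineSpan]
  exact h.span_singleton_sup (by rwa [finrank_simplexDir hv]) hq

end Transversality

theorem stmt_16_general (n k d C : ℕ) (hk : k < n) (hd : d ≤ n - k)
    (ε : ℝ) (hε : 0 < ε) (p : EuclideanSpace ℝ (Fin n))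
    (dm : Fin C → ℕ) (vs : (c : Fin C) → Fin (dm c + 1) → EuclideanSpace ℝ (Fin n))
    (hAI : ∀ c, AffineIndependent ℝ (vs c))
    (hT : ∀ c, Transv (simplexDir (vs c)) (stdFol n k)) :
    ∃ δ > (0:ℝ), ∃ p' : EuclideanSpace ℝ (Fin n), dist p' p < ε ∧
      Metric.ball p' δ ⊆ Metric.ball p ε ∧
      ∀ c, dm c + 1 = d → SemiT δ p' (vs c) (stdFol n k) := by
  set W := stdFol n k
  have hlt : ∀ c, dm c + 1 = d → dm c + finrank ℝ W < n := by
    intro c hc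
    rw [finrank_stdFol hk.le]
    omega
  -- `q⋆Δ` fails to be a simplex transverse to `W` exactly when `q ∈ vs c 0 + (Gr(Δ) ⊔ W)`.
  let A : {c // dm c + 1 = d} → AffineSubspace ℝ (EuclideanSpace ℝ (Fin n)) :=
    fun c => AffineSubspace.mk' (vs c 0) (simplexDir (vs c) ⊔ W)
  have hA : ∀ c, A c ≠ ⊤ := by
    rintro ⟨c, hc⟩ htop
    refine (hT c).sup_ne_top (by rw [finrank_simplexDir (hAI c)]; exact hlt c hc) ?_
    simpa [A] using congrArg AffineSubspace.direction htop
  obtain ⟨δ, hδ, p', hp', hball, hA'⟩ :=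
    exists_ball_subset_ball_forall_notMem_affineSubspace hA p hε
  refine ⟨δ, hδ, p', hp', hball, fun c hc q hq => ?_⟩
  have hqc : q - vs c 0 ∉ simplexDir (vs c) ⊔ W := hA' q (mem_ball.2 hq) ⟨c, hc⟩
  have hqc' : q - vs c 0 ∉ simplexDir (vs c) := fun h => hqc (Submodule.mem_sup_left h)
  rw [simplexDir, direction_affineSpan] at hqc'
  exact ⟨(hAI c).cons hqc', (hT c).simplexDir_cons (hAI c) (hlt c hc) hqc⟩

theorem stmt_16 (n k d C : ℕ) (hk : k < n) (hd1 : 1 ≤ d) (hd : d ≤ n - k)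
    (ε : ℝ) (hε : 0 < ε) (p : EuclideanSpace ℝ (Fin n))
    (dm : Fin C → ℕ) (vs : (c : Fin C) → Fin (dm c + 1) → EuclideanSpace ℝ (Fin n))
    (hAI : ∀ c, AffineIndependent ℝ (vs c))
    (hT : ∀ c, Transv (simplexDir (vs c)) (stdFol n k)) :
    ∃ δ > (0:ℝ), ∃ p' : EuclideanSpace ℝ (Fin n), dist p' p < ε ∧
      Metric.ball p' δ ⊆ Metric.ball p ε ∧
      ∀ c, dm c + 1 = d → SemiT δ p' (vs c) (stdFol n k) :=
  stmt_16_general n k d C hk hd ε hε p dm vs hAI hT
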